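/- Let G₁ and G₂ be finite abelian groups with |G₁| ≥ 2 and |G₂| ≥ 2, and let F : G₁ → G₂ be a function with differential uniformity k = Δ_F. Then the derivative imbalance satisfies NB_F ≥ (|G₂|/(|G₂| − 1))·(k − |G₁|/|G₂|)², as an inequality of rational numbers. -/

import Mathlib

/-! For each `a`, the values `δ_F(a, ·)` sum to `|G₁|`, so `Σ_b δ_F(a,b)² − |G₁|²/|G₂|` is the
sum of squared deviations of `δ_F(a, ·)` from its mean `|G₁|/|G₂|`, and `NB_F` is the total of
these over `a ≠ 0`. Keep only the row `a` containing a value `δ_F(a,b) = k`: the other `|G₂| − 1`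
deviations in that row sum to `−(k − |G₁|/|G₂|)`, so by Cauchy–Schwarz their squares add up to at
least `(k − |G₁|/|G₂|)² / (|G₂| − 1)`. -/

open Finset

/-- `δ_F(a,b) = |{x : F(x+a) - F(x) = b}|`. -/
def deltaF {G₁ G₂ : Type*} [AddCommGroup G₁] [Fintype G₁] [DecidableEq G₁]
    [AddCommGroup G₂] [DecidableEq G₂] (F : G₁ → G₂) (a : G₁) (b : G₂) : ℕ :=
  (univ.filter fun x => F (x + a) - F x = b).card

/-- The derivative imbalance `NB_F = Σ_{a ≠ 0} Σ_b δ_F(a,b)² − (|G₁|−1)·|G₁|²/|G₂|`. -/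
def NB {G₁ G₂ : Type*} [AddCommGroup G₁] [Fintype G₁] [DecidableEq G₁]
    [AddCommGroup G₂] [Fintype G₂] [DecidableEq G₂] (F : G₁ → G₂) : ℚ :=
  (∑ a ∈ univ.filter (fun a : G₁ => a ≠ 0), ∑ b : G₂, (deltaF F a b : ℚ) ^ 2)
    - ((Fintype.card G₁ : ℚ) - 1) * (Fintype.card G₁ : ℚ) ^ 2 / (Fintype.card G₂ : ℚ)

/-- The differential uniformity `Δ_F = max_{a ≠ 0, b} δ_F(a,b)`. -/
def diffUnif {G₁ G₂ : Type*} [AddCommGroup G₁] [Fintype G₁] [DecidableEq G₁]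
    [AddCommGroup G₂] [Fintype G₂] [DecidableEq G₂] (F : G₁ → G₂) : ℕ :=
  (univ.filter (fun a : G₁ => a ≠ 0)).sup fun a => univ.sup fun b : G₂ => deltaF F a b

namespace Finset

variable {ι K : Type*}

theorem sum_sub_div_card_sq [Field K] (s : Finset ι) (f : ι → K) :
    ∑ i ∈ s, (f i - (∑ j ∈ s, f j) / #s) ^ 2 = ∑ i ∈ s, f i ^ 2 - (∑ i ∈ s, f i) ^ 2 / #s := by
  by_cases hs : (#s : K) = 0
  · simp [hs]
  · simp only [sub_sq, sum_add_distrib, sum_sub_distrib, ← sum_mul, ← mul_sum, sum_const,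
      nsmul_eq_mul]
    field_simp
    ring

variable [Field K] [LinearOrder K] [IsStrictOrderedRing K]

theorem card_div_card_sub_one_mul_sq_le_sum_sq {s : Finset ι} {g : ι → K}
    (hg : ∑ j ∈ s, g j = 0) {i : ι} (hi : i ∈ s) :
    #s / (#s - 1) * g i ^ 2 ≤ ∑ j ∈ s, g j ^ 2 := by
  classical
  have hrest : ∑ j ∈ s.erase i, g j = -g i := by
    linarith [add_sum_erase s g hi]
  have hcs : g i ^ 2 ≤ (#s - 1) * ∑ j ∈ s.erase i, g j ^ 2 := by
    have := sq_sum_le_card_mul_sum_sq (s := s.erase i) (f := g)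
    rwa [hrest, neg_sq, card_erase_of_mem hi, Nat.cast_pred (card_pos.2 ⟨i, hi⟩)] at this
  rw [← add_sum_erase s _ hi]
  rcases (one_le_card.2 ⟨i, hi⟩).eq_or_lt with hs | hs
  · -- the factor is `1 / 0 = 0`
    rw [← hs]
    norm_num
    positivity
  · have hpos : (0 : K) < #s - 1 := by
      rw [sub_pos]; exact_mod_cast hs
    rw [div_mul_eq_mul_div, div_le_iff₀ hpos]
    nlinarith

end Finset

section DerivativeImbalance

variable {G₁ G₂ : Type*} [AddCommGroup G₁] [Fintype G₁] [DecidableEq G₁]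
  [AddCommGroup G₂] [Fintype G₂] [DecidableEq G₂] (F : G₁ → G₂)

theorem sum_deltaF (a : G₁) : ∑ b : G₂, (deltaF F a b : ℚ) = Fintype.card G₁ := by
  rw [Fintype.card, card_eq_sum_card_fiberwise (fun x _ => mem_univ (F (x + a) - F x))]
  push_cast
  rfl

theorem sum_deltaF_sub_mean (a : G₁) :
    ∑ b : G₂, ((deltaF F a b : ℚ) - Fintype.card G₁ / Fintype.card G₂) = 0 := by
  rw [sum_sub_distrib, sum_deltaF, sum_const, card_univ, nsmul_eq_mul]
  field_simp
  ring

theorem NB_eq_sum_sum_sq_sub_mean : NB F = ∑ a ∈ univ.filter (fun a : G₁ => a ≠ 0),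
    ∑ b : G₂, ((deltaF F a b : ℚ) - Fintype.card G₁ / Fintype.card G₂) ^ 2 := by
  have hinner (a : G₁) : ∑ b : G₂, ((deltaF F a b : ℚ) - Fintype.card G₁ / Fintype.card G₂) ^ 2 =
      ∑ b : G₂, (deltaF F a b : ℚ) ^ 2 - (Fintype.card G₁ : ℚ) ^ 2 / Fintype.card G₂ := by
    simpa only [sum_deltaF, card_univ] using sum_sub_div_card_sq univ fun b => (deltaF F a b : ℚ)
  rw [NB, sum_congr rfl fun a _ => hinner a, sum_sub_distrib, sum_const, filter_ne',
    card_erase_of_mem (mem_univ _), card_univ, nsmul_eq_mul, Nat.cast_pred Fintype.card_pos]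
  ring

theorem sum_sq_deltaF_sub_mean_le_NB {a : G₁} (ha : a ≠ 0) :
    ∑ b : G₂, ((deltaF F a b : ℚ) - Fintype.card G₁ / Fintype.card G₂) ^ 2 ≤ NB F := by
  rw [NB_eq_sum_sum_sq_sub_mean]
  exact single_le_sum (f := fun a =>
    ∑ b : G₂, ((deltaF F a b : ℚ) - Fintype.card G₁ / Fintype.card G₂) ^ 2)
    (fun _ _ => by positivity) (by simpa using ha)

theorem exists_deltaF_eq_diffUnif [Nontrivial G₁] :
    ∃ a ≠ 0, ∃ b, deltaF F a b = diffUnif F := by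
  obtain ⟨a₁, ha₁⟩ := exists_ne (0 : G₁)
  obtain ⟨a, ha, hsup⟩ := exists_mem_eq_sup (univ.filter (fun a : G₁ => a ≠ 0))
    ⟨a₁, mem_filter.2 ⟨mem_univ a₁, ha₁⟩⟩ fun a => univ.sup fun b => deltaF F a b
  obtain ⟨b, -, hb⟩ := exists_mem_eq_sup univ univ_nonempty (deltaF F a)
  exact ⟨a, (mem_filter.1 ha).2, b, by rw [diffUnif, hsup, hb]⟩

end DerivativeImbalance

theorem NB_lower_bound_diff_uniformity_general {G₁ G₂ : Type*}
    [AddCommGroup G₁] [Fintype G₁] [DecidableEq G₁]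
    [AddCommGroup G₂] [Fintype G₂] [DecidableEq G₂]
    (h₁ : 2 ≤ Fintype.card G₁)
    (F : G₁ → G₂) (k : ℕ) (hk : k = diffUnif F) :
    (Fintype.card G₂ : ℚ) / ((Fintype.card G₂ : ℚ) - 1) *
        ((k : ℚ) - (Fintype.card G₁ : ℚ) / (Fintype.card G₂ : ℚ)) ^ 2 ≤ NB F := by
  have : Nontrivial G₁ := Fintype.one_lt_card_iff_nontrivial.1 h₁
  obtain ⟨a, ha, b, hab⟩ := exists_deltaF_eq_diffUnif F
  calc _ = (#(univ : Finset G₂) : ℚ) / (#(univ : Finset G₂) - 1) *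
        ((deltaF F a b : ℚ) - Fintype.card G₁ / Fintype.card G₂) ^ 2 := by
        rw [hk, ← hab, card_univ]
    _ ≤ ∑ b : G₂, ((deltaF F a b : ℚ) - Fintype.card G₁ / Fintype.card G₂) ^ 2 :=
        card_div_card_sub_one_mul_sq_le_sum_sq (sum_deltaF_sub_mean F a) (mem_univ b)
    _ ≤ NB F := sum_sq_deltaF_sub_mean_le_NB F ha

theorem NB_lower_bound_diff_uniformity {G₁ G₂ : Type*}
    [AddCommGroup G₁] [Fintype G₁] [DecidableEq G₁]
    [AddCommGroup G₂] [Fintype G₂] [DecidableEq G₂]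
    (h₁ : 2 ≤ Fintype.card G₁) (h₂ : 2 ≤ Fintype.card G₂)
    (F : G₁ → G₂) (k : ℕ) (hk : k = diffUnif F) :
    (Fintype.card G₂ : ℚ) / ((Fintype.card G₂ : ℚ) - 1) *
        ((k : ℚ) - (Fintype.card G₁ : ℚ) / (Fintype.card G₂ : ℚ)) ^ 2 ≤ NB F :=
  NB_lower_bound_diff_uniformity_general h₁ F k hk
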